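/- Let $(E,A)$ be a regular matrix pencil and suppose $S_1, T_1$ and $S_2, T_2$ are two pairs of nonsingular matrices putting $(E,A)$ into Weierstraß-type form with nilpotent blocks $N_1$ and $N_2$ respectively (i.e. $S_i E T_i = \operatorname{diag}(I_{d_i}, N_i)$, $S_i A T_i = \operatorname{diag}(J_i, I_{n-d_i})$ with $N_i$ nilpotent). Then $d_1 = d_2$ and the indices of nilpotency of $N_1$ and $N_2$ coincide. -/

import Mathlib

/-- The polynomial `s ↦ det (s E - A)` of a matrix pencil. -/
noncomputable def pencilPoly {m : Type*} [Fintype m] [DecidableEq m]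
    (E A : Matrix m m ℝ) : Polynomial ℝ :=
  ((Polynomial.X : Polynomial ℝ) • E.map Polynomial.C - A.map Polynomial.C).det

/-!
Transforming `s E - A` by `S, T` turns it into `diag(s - J, s N - 1)`, and `s N - 1` is
invertible over `ℝ[s]` because `N` is nilpotent; so `det (s E - A)` is associated to the
characteristic polynomial of `J` and has degree `d`.

For the index, fix `c` with `det (c E - A) ≠ 0`. Then `(c E - A)⁻¹ E` is similar to
`diag((c - J)⁻¹, (c N - 1)⁻¹ N)`: an invertible block plus a nilpotent block whose powers vanish
exactly when those of `N` do. For such a matrix `M`, `N ^ k = 0` iff `M ^ k` is divisible by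
every power of `M`, i.e. iff `k` is at least the Drazin index of `M`, which only depends on
`(E, A)`.
-/

open Polynomial Matrix

theorem Units.conj_dvd_conj_iff {M : Type*} [Monoid M] (u : Mˣ) {a b : M} :
    ↑u * a * ↑u⁻¹ ∣ ↑u * b * ↑u⁻¹ ↔ a ∣ b := by
  constructor
  · rintro ⟨c, hc⟩
    refine ⟨((u⁻¹ : Mˣ) : M) * c * u, ?_⟩
    simpa [mul_assoc] using congrArg (fun x => ((u⁻¹ : Mˣ) : M) * x * u) hc
  · rintro ⟨c, rfl⟩
    exact ⟨↑u * c * ↑u⁻¹, by simp [mul_assoc]⟩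

theorem Commute.units_mul_pow_eq_zero_iff {M₀ : Type*} [MonoidWithZero M₀] {u : M₀ˣ} {a : M₀}
    (h : Commute (↑u) a) (k : ℕ) : (↑u * a) ^ k = 0 ↔ a ^ k = 0 := by
  rw [h.mul_pow, ← Units.val_pow_eq_pow_val, Units.mul_right_eq_zero]

theorem Matrix.forall_pow_dvd_fromBlocks_pow_iff {p q R : Type*} [Fintype p] [DecidableEq p]
    [Fintype q] [DecidableEq q] [Semiring R] {B : Matrix p p R} {Z : Matrix q q R}
    (hB : IsUnit B) (hZ : IsNilpotent Z) (k : ℕ) :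
    (∀ j, fromBlocks B 0 0 Z ^ j ∣ fromBlocks B 0 0 Z ^ k) ↔ Z ^ k = 0 := by
  simp only [fromBlocks_diagonal_pow]
  constructor
  · intro h
    obtain ⟨j, hj⟩ := hZ
    obtain ⟨Y, hY⟩ := h j
    rw [← fromBlocks_toBlocks Y, fromBlocks_multiply, hj] at hY
    simpa using congrArg toBlocks₂₂ hY
  · intro hk j
    refine ⟨fromBlocks (((hB.unit ^ j)⁻¹ : (Matrix p p R)ˣ) * B ^ k) 0 0 0, ?_⟩
    have hBj : B ^ j = ((hB.unit ^ j : (Matrix p p R)ˣ) : Matrix p p R) := by simp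
    rw [fromBlocks_multiply, hk, hBj, Units.mul_inv_cancel_left]
    simp

noncomputable def pencilMatrix {m R : Type*} [CommRing R] (E A : Matrix m m R) :
    Matrix m m R[X] :=
  (X : R[X]) • E.map C - A.map C

section Weierstrass

variable {m p q : Type*} [Fintype m] [DecidableEq p] [DecidableEq q]

theorem eval_det_pencilMatrix {R : Type*} [CommRing R] [DecidableEq m] (E A : Matrix m m R)
    (c : R) : (pencilMatrix E A).det.eval c = (c • E - A).det := by
  rw [← coe_evalRingHom, RingHom.map_det]
  congr 1
  ext i j
  simp only [pencilMatrix, RingHom.mapMatrix_apply, Matrix.map_apply, Matrix.sub_apply,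
    Matrix.smul_apply, smul_eq_mul, coe_evalRingHom, eval_sub, eval_mul, eval_C, eval_X]

theorem submatrix_mul_smul_sub_mul_eq_fromBlocks {R : Type*} [CommRing R]
    {E A S T : Matrix m m R} {e : m ≃ p ⊕ q} {J : Matrix p p R} {N : Matrix q q R}
    (hE : (S * E * T).submatrix e.symm e.symm = fromBlocks 1 0 0 N)
    (hA : (S * A * T).submatrix e.symm e.symm = fromBlocks J 0 0 1) (x : R) :
    (S * (x • E - A) * T).submatrix e.symm e.symm = fromBlocks (x • 1 - J) 0 0 (x • N - 1) := by
  simp only [Matrix.mul_sub, Matrix.sub_mul, Matrix.mul_smul, Matrix.smul_mul, submatrix_sub,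
    submatrix_smul, Pi.sub_apply, Pi.smul_apply, hE, hA]
  rw [fromBlocks_smul, sub_eq_add_neg, fromBlocks_neg, fromBlocks_add]
  simp [sub_eq_add_neg]

theorem submatrix_mul_pencilMatrix_mul_eq_fromBlocks {R : Type*} [CommRing R] [Fintype p]
    {E A S T : Matrix m m R} {e : m ≃ p ⊕ q} {J : Matrix p p R} {N : Matrix q q R}
    (hE : (S * E * T).submatrix e.symm e.symm = fromBlocks 1 0 0 N)
    (hA : (S * A * T).submatrix e.symm e.symm = fromBlocks J 0 0 1) :
    (S.map C * pencilMatrix E A * T.map C).submatrix e.symm e.symm =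
      fromBlocks J.charmatrix 0 0 ((X : R[X]) • N.map C - 1) := by
  have map_hE := congrArg (Matrix.map · (C : R →+* R[X])) hE
  have map_hA := congrArg (Matrix.map · (C : R →+* R[X])) hA
  simp only [← submatrix_map, Matrix.map_mul, fromBlocks_map, Matrix.map_zero _ (map_zero C),
    Matrix.map_one _ (map_zero C) (map_one C)] at map_hE map_hA
  rw [pencilMatrix, submatrix_mul_smul_sub_mul_eq_fromBlocks map_hE map_hA, charmatrix,
    scalar_apply, ← smul_one_eq_diagonal]
  rfl

theorem natDegree_det_pencilMatrix {R : Type*} [CommRing R] [IsDomain R] [DecidableEq m] [Fintype p] [Fintype q]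
    {E A S T : Matrix m m R} {e : m ≃ p ⊕ q} {J : Matrix p p R} {N : Matrix q q R}
    (hS : IsUnit S) (hT : IsUnit T) (hN : IsNilpotent N)
    (hE : (S * E * T).submatrix e.symm e.symm = fromBlocks 1 0 0 N)
    (hA : (S * A * T).submatrix e.symm e.symm = fromBlocks J 0 0 1) :
    (pencilMatrix E A).det.natDegree = Fintype.card p := by
  have hdet : (pencilMatrix E A).det * (C S.det * C T.det) =
      J.charpoly * ((X : R[X]) • N.map C - 1).det := by
    have hdetBlocks := congrArg det (submatrix_mul_pencilMatrix_mul_eq_fromBlocks hE hA)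
    have hCS : (S.map C).det = C S.det := (RingHom.map_det C S).symm
    have hCT : (T.map C).det = C T.det := (RingHom.map_det C T).symm
    rw [det_submatrix_equiv_self, det_mul, det_mul, det_fromBlocks_zero₂₁, hCS, hCT] at hdetBlocks
    rw [charpoly, ← hdetBlocks]
    ring
  have hST : IsUnit (C S.det * C T.det) :=
    (((isUnit_iff_isUnit_det S).mp hS).map C).mul (((isUnit_iff_isUnit_det T).mp hT).map C)
  have hNX : IsUnit ((X : R[X]) • N.map C - 1).det := by
    rw [← isUnit_iff_isUnit_det]
    exact ((hN.map (C : R →+* R[X]).mapMatrix).smul X).isUnit_sub_one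
  have hassoc : Associated (pencilMatrix E A).det J.charpoly :=
    (associated_mul_unit_right _ _ hST).trans (hdet ▸ associated_mul_unit_left _ _ hNX)
  rw [natDegree_eq_of_degree_eq (degree_eq_degree_of_associated hassoc),
    charpoly_natDegree_eq_dim]

theorem forall_pow_dvd_resolvent_pow_iff {R : Type*} [CommRing R] [DecidableEq m] [Fintype p]
    [Fintype q] {E A S T : Matrix m m R} {e : m ≃ p ⊕ q} {J : Matrix p p R} {N : Matrix q q R}
    {c : R} (hc : IsUnit (c • E - A)) (hS : IsUnit S) (hT : IsUnit T) (hN : IsNilpotent N)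
    (hE : (S * E * T).submatrix e.symm e.symm = fromBlocks 1 0 0 N)
    (hA : (S * A * T).submatrix e.symm e.symm = fromBlocks J 0 0 1) (k : ℕ) :
    (∀ j, ((c • E - A)⁻¹ * E) ^ j ∣ ((c • E - A)⁻¹ * E) ^ k) ↔ N ^ k = 0 := by
  have hG := submatrix_mul_smul_sub_mul_eq_fromBlocks hE hA c
  have hNc : IsUnit (c • N - 1) := (hN.smul c).isUnit_sub_one
  have hJc : IsUnit (c • 1 - J) := by
    have hSGT := (hS.mul hc).mul hT
    rw [← isUnit_submatrix_equiv e.symm e.symm, hG, isUnit_fromBlocks_zero₂₁] at hSGT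
    exact hSGT.1
  set Q := (S * (c • E - A) * T)⁻¹ * (S * E * T)
  have hQ : Q.submatrix e.symm e.symm = fromBlocks (c • 1 - J)⁻¹ 0 0 ((c • N - 1)⁻¹ * N) := by
    rw [← submatrix_mul_equiv _ _ _ e.symm, ← inv_submatrix_equiv, hG, hE,
      inv_fromBlocks_zero₂₁_of_isUnit_iff _ _ _ (iff_of_true hJc hNc), fromBlocks_multiply]
    simp
  have hsim : (c • E - A)⁻¹ * E =
      (hT.unit : Matrix m m R) * Q * ((hT.unit⁻¹ : (Matrix m m R)ˣ) : Matrix m m R) := by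
    have hS' := (isUnit_iff_isUnit_det S).mp hS
    have hT' := (isUnit_iff_isUnit_det T).mp hT
    rw [coe_units_inv, IsUnit.unit_spec]
    simp only [Q, Matrix.mul_inv_rev, mul_assoc, mul_nonsing_inv _ hT', mul_one,
      nonsing_inv_mul_cancel_left _ _ hS', mul_nonsing_inv_cancel_left _ _ hT']
  have hZ : ∀ k, ((c • N - 1)⁻¹ * N) ^ k = 0 ↔ N ^ k = 0 := by
    have hcomm : Commute ((hNc.unit⁻¹ : (Matrix q q R)ˣ) : Matrix q q R) N :=
      (((Commute.refl N).smul_left c).sub_left (Commute.one_left N)).units_inv_left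
    rw [← IsUnit.unit_spec hNc, ← coe_units_inv]
    exact hcomm.units_mul_pow_eq_zero_iff
  have hZnil : IsNilpotent ((c • N - 1)⁻¹ * N) := by
    obtain ⟨n, hn⟩ := hN
    exact ⟨n, (hZ n).mpr hn⟩
  have hblock : ∀ j, ((c • E - A)⁻¹ * E) ^ j ∣ ((c • E - A)⁻¹ * E) ^ k ↔
      fromBlocks (c • 1 - J)⁻¹ 0 0 ((c • N - 1)⁻¹ * N) ^ j ∣
        fromBlocks (c • 1 - J)⁻¹ 0 0 ((c • N - 1)⁻¹ * N) ^ k := fun j => by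
    rw [hsim, Units.conj_pow, Units.conj_pow, Units.conj_dvd_conj_iff,
      ← map_dvd_iff (reindexAlgEquiv R R e), map_pow, map_pow, coe_reindexAlgEquiv,
      reindex_apply, hQ]
  simp_rw [hblock]
  rw [forall_pow_dvd_fromBlocks_pow_iff (isUnit_nonsing_inv_iff.mpr hJc) hZnil, hZ]

end Weierstrass

theorem stmt13_general (n d₁ d₂ : ℕ) (E A : Matrix (Fin n) (Fin n) ℝ)
    (hreg : pencilPoly E A ≠ 0)
    (S₁ T₁ S₂ T₂ : Matrix (Fin n) (Fin n) ℝ)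
    (e₁ : Fin n ≃ (Fin d₁ ⊕ Fin (n - d₁))) (e₂ : Fin n ≃ (Fin d₂ ⊕ Fin (n - d₂)))
    (J₁ : Matrix (Fin d₁) (Fin d₁) ℝ) (N₁ : Matrix (Fin (n - d₁)) (Fin (n - d₁)) ℝ)
    (J₂ : Matrix (Fin d₂) (Fin d₂) ℝ) (N₂ : Matrix (Fin (n - d₂)) (Fin (n - d₂)) ℝ)
    (hS₁ : IsUnit S₁) (hT₁ : IsUnit T₁) (hS₂ : IsUnit S₂) (hT₂ : IsUnit T₂)
    (hN₁ : IsNilpotent N₁) (hN₂ : IsNilpotent N₂)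
    (hE₁ : (S₁ * E * T₁).submatrix e₁.symm e₁.symm = Matrix.fromBlocks 1 0 0 N₁)
    (hA₁ : (S₁ * A * T₁).submatrix e₁.symm e₁.symm = Matrix.fromBlocks J₁ 0 0 1)
    (hE₂ : (S₂ * E * T₂).submatrix e₂.symm e₂.symm = Matrix.fromBlocks 1 0 0 N₂)
    (hA₂ : (S₂ * A * T₂).submatrix e₂.symm e₂.symm = Matrix.fromBlocks J₂ 0 0 1) :
    d₁ = d₂ ∧ ∀ k : ℕ, N₁ ^ k = 0 ↔ N₂ ^ k = 0 := by
  obtain ⟨c, hc⟩ : ∃ c : ℝ, (pencilPoly E A).eval c ≠ 0 := by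
    by_contra! h
    exact hreg (Polynomial.funext (by simpa using h))
  have hcE : IsUnit (c • E - A) := by
    rw [isUnit_iff_isUnit_det, ← eval_det_pencilMatrix]
    exact hc.isUnit
  refine ⟨?_, fun k => ?_⟩
  · simpa using (natDegree_det_pencilMatrix hS₁ hT₁ hN₁ hE₁ hA₁).symm.trans
      (natDegree_det_pencilMatrix hS₂ hT₂ hN₂ hE₂ hA₂)
  · rw [← forall_pow_dvd_resolvent_pow_iff hcE hS₁ hT₁ hN₁ hE₁ hA₁,
      forall_pow_dvd_resolvent_pow_iff hcE hS₂ hT₂ hN₂ hE₂ hA₂]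

/-- Well-definedness of the differentiation index: two Weierstraß-type decompositions of the
same regular pencil have the same size `d` of the differential block and nilpotent blocks of
the same nilpotency index. -/
theorem stmt13 (n d₁ d₂ : ℕ) (E A : Matrix (Fin n) (Fin n) ℝ)
    (hreg : pencilPoly E A ≠ 0)
    (S₁ T₁ S₂ T₂ : Matrix (Fin n) (Fin n) ℝ)
    (e₁ : Fin n ≃ (Fin d₁ ⊕ Fin (n - d₁))) (e₂ : Fin n ≃ (Fin d₂ ⊕ Fin (n - d₂)))
    (J₁ : Matrix (Fin d₁) (Fin d₁) ℝ) (N₁ : Matrix (Fin (n - d₁)) (Fin (n - d₁)) ℝ)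
    (J₂ : Matrix (Fin d₂) (Fin d₂) ℝ) (N₂ : Matrix (Fin (n - d₂)) (Fin (n - d₂)) ℝ)
    (hS₁ : IsUnit S₁) (hT₁ : IsUnit T₁) (hS₂ : IsUnit S₂) (hT₂ : IsUnit T₂)
    (hN₁ : IsNilpotent N₁) (hN₂ : IsNilpotent N₂)
    (hd₁ : d₁ ≤ n) (hd₂ : d₂ ≤ n)
    (hE₁ : (S₁ * E * T₁).submatrix e₁.symm e₁.symm = Matrix.fromBlocks 1 0 0 N₁)
    (hA₁ : (S₁ * A * T₁).submatrix e₁.symm e₁.symm = Matrix.fromBlocks J₁ 0 0 1)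
    (hE₂ : (S₂ * E * T₂).submatrix e₂.symm e₂.symm = Matrix.fromBlocks 1 0 0 N₂)
    (hA₂ : (S₂ * A * T₂).submatrix e₂.symm e₂.symm = Matrix.fromBlocks J₂ 0 0 1) :
    d₁ = d₂ ∧ ∀ k : ℕ, N₁ ^ k = 0 ↔ N₂ ^ k = 0 :=
  stmt13_general n d₁ d₂ E A hreg S₁ T₁ S₂ T₂ e₁ e₂ J₁ N₁ J₂ N₂ hS₁ hT₁ hS₂ hT₂ hN₁ hN₂ hE₁ hA₁ hE₂
    hA₂
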